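/- arXiv:0809.0813 — 5 statements merged into one kernel-verified Lean document; each statement's English description precedes it below -/
import Mathlib

section
/- For every real s, exp(s) ≤ s + exp(9s²/16). -/
/-!
For `s ≤ 0` the alternating Taylor bound `exp s ≤ 1 + s + s²/2` already suffices, and for
`s ≥ 16/9` we have `s ≤ 9s²/16`, so `exp s ≤ exp (9s²/16)`. In between, write `exp s = exp (s/2)²`,
bound `exp (s/2)` above by its degree-five Taylor bound with remainder (valid as `s/2 ≤ 1`) and
`exp (9s²/16)` below by its degree-four Taylor polynomial; what is left is a polynomial inequality
on `[0, 16/9]`, tightest near `s ≈ 0.628`.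
-/

open Real Finset

namespace Real

/-- Since `(1 + x + x²/2)(1 - x + x²/2) = 1 + x⁴/4 ≥ 1`, this follows from the lower Taylor bound
at `-x`. -/
lemma exp_le_one_add_add_sq_div_two_of_nonpos {x : ℝ} (hx : x ≤ 0) :
    exp x ≤ 1 + x + x ^ 2 / 2 := by
  have hneg : 1 - x + x ^ 2 / 2 ≤ exp (-x) := by
    simpa [← sub_eq_add_neg] using quadratic_le_exp_of_nonneg (neg_nonneg.2 hx)
  have hprod : exp x * exp (-x) = 1 := by rw [← exp_add, add_neg_cancel, exp_zero]
  nlinarith [mul_le_mul_of_nonneg_left hneg (exp_nonneg x), exp_pos x, sq_nonneg (x ^ 2)]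

lemma quartic_le_exp_of_nonneg {x : ℝ} (hx : 0 ≤ x) :
    1 + x + x ^ 2 / 2 + x ^ 3 / 6 + x ^ 4 / 24 ≤ exp x := by
  have h := sum_le_exp_of_nonneg hx 5
  simp only [sum_range_succ, range_zero, sum_empty, Nat.factorial] at h
  norm_num at h
  linarith

lemma exp_le_quintic_of_nonneg_of_le_one {x : ℝ} (h0 : 0 ≤ x) (h1 : x ≤ 1) :
    exp x ≤ 1 + x + x ^ 2 / 2 + x ^ 3 / 6 + x ^ 4 / 24 + x ^ 5 / 100 := by
  have h := exp_bound' h0 h1 (n := 5) (by norm_num)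
  simp only [sum_range_succ, range_zero, sum_empty, Nat.factorial] at h
  norm_num at h
  linarith

end Real

lemma sq_quintic_half_le_add_quartic_nine_sixteenths_sq {s : ℝ} (hs0 : 0 ≤ s) (hs1 : s ≤ 16 / 9) :
    (1 + s / 2 + (s / 2) ^ 2 / 2 + (s / 2) ^ 3 / 6 + (s / 2) ^ 4 / 24 + (s / 2) ^ 5 / 100) ^ 2 ≤
      s + (1 + 9 * s ^ 2 / 16 + (9 * s ^ 2 / 16) ^ 2 / 2 + (9 * s ^ 2 / 16) ^ 3 / 6 +
        (9 * s ^ 2 / 16) ^ 4 / 24) := by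
  nlinarith [sq_nonneg (s * (s - 0.628)), sq_nonneg (s ^ 2 * (s - 0.628)),
    sq_nonneg (s ^ 3 * (s - 0.628)), mul_nonneg hs0 (sub_nonneg.2 hs1)]

lemma exp_le_add_exp_nine_sixteenths_sq_of_nonpos {s : ℝ} (hs : s ≤ 0) :
    exp s ≤ s + exp (9 * s ^ 2 / 16) := by
  nlinarith [exp_le_one_add_add_sq_div_two_of_nonpos hs, add_one_le_exp (9 * s ^ 2 / 16)]

lemma exp_le_add_exp_nine_sixteenths_sq_of_mem_Icc {s : ℝ} (hs0 : 0 ≤ s) (hs1 : s ≤ 16 / 9) :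
    exp s ≤ s + exp (9 * s ^ 2 / 16) := by
  have hhalf := exp_le_quintic_of_nonneg_of_le_one (x := s / 2) (by linarith) (by linarith)
  calc exp s = exp (s / 2) ^ 2 := by rw [sq, ← exp_add, add_halves]
    _ ≤ (1 + s / 2 + (s / 2) ^ 2 / 2 + (s / 2) ^ 3 / 6 + (s / 2) ^ 4 / 24 + (s / 2) ^ 5 / 100) ^ 2 :=
      pow_le_pow_left₀ (exp_nonneg _) hhalf 2
    _ ≤ s + (1 + 9 * s ^ 2 / 16 + (9 * s ^ 2 / 16) ^ 2 / 2 + (9 * s ^ 2 / 16) ^ 3 / 6 +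
        (9 * s ^ 2 / 16) ^ 4 / 24) :=
      sq_quintic_half_le_add_quartic_nine_sixteenths_sq hs0 hs1
    _ ≤ s + exp (9 * s ^ 2 / 16) := by
      gcongr
      exact quartic_le_exp_of_nonneg (by positivity)

lemma exp_le_add_exp_nine_sixteenths_sq_of_sixteen_ninths_le {s : ℝ} (hs : 16 / 9 ≤ s) :
    exp s ≤ s + exp (9 * s ^ 2 / 16) := by
  have hexp : exp s ≤ exp (9 * s ^ 2 / 16) := exp_le_exp.2 (by nlinarith)
  linarith

theorem exp_le_add_exp_nine_sixteenths_sq (s : ℝ) :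
    Real.exp s ≤ s + Real.exp (9 * s ^ 2 / 16) := by
  rcases le_total s 0 with hs | hs
  · exact exp_le_add_exp_nine_sixteenths_sq_of_nonpos hs
  rcases le_total s (16 / 9) with hs' | hs'
  · exact exp_le_add_exp_nine_sixteenths_sq_of_mem_Icc hs hs'
  · exact exp_le_add_exp_nine_sixteenths_sq_of_sixteen_ninths_le hs'
end

section
/- Let (ψ_i)_{i=1}^N be adapted to a filtration (F_i), with deterministic μ_i ≥ 0 and ν_i > 0 such that almost surely E[ψ_i | F_{i−1}] ≤ μ_i and |ψ_i| ≤ ν_i. Then for every γ ≥ 0, Prob{ Σ_{i=1}^N ψ_i > Σ μ_i + γ·sqrt(Σ ν_i²) } ≤ exp(−γ²/2). -/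
/-!
Given `ℱ (i - 1)`, convexity of `exp` on `[-t ν_i, t ν_i]` bounds `exp (t ψ_i)` by an affine
function of `ψ_i`, whose conditional expectation is at most
`cosh (t ν_i) + (μ_i / ν_i) sinh (t ν_i) ≤ exp (t μ_i + t² ν_i² / 2)`.
Peeling off the last factor with the tower property bounds the moment generating function of
`∑ ψ_i` by `exp (t ∑ μ_i + t² ∑ ν_i² / 2)`, and Chernoff's bound at `t = γ / √(∑ ν_i²)` gives
`exp (-γ² / 2)`.
-/

open MeasureTheory ProbabilityTheory Real Finset Filter

namespace Real

lemma sinh_le_mul_cosh {x : ℝ} (hx : 0 ≤ x) : sinh x ≤ x * cosh x := by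
  refine hasSum_le (fun n ↦ ?_) (hasSum_sinh x) ((hasSum_cosh x).mul_left x)
  rw [pow_succ', mul_div_assoc]
  gcongr
  omega

lemma cosh_add_mul_sinh_le_exp {r x : ℝ} (hr : 0 ≤ r) (hx : 0 ≤ x) :
    cosh x + r * sinh x ≤ exp (r * x + x ^ 2 / 2) :=
  calc cosh x + r * sinh x ≤ (r * x + 1) * cosh x := by
        nlinarith [mul_le_mul_of_nonneg_left (sinh_le_mul_cosh hx) hr]
    _ ≤ exp (r * x) * exp (x ^ 2 / 2) :=
        mul_le_mul (add_one_le_exp _) (cosh_le_exp_half_sq x) (cosh_pos x).le (exp_pos _).le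
    _ = exp (r * x + x ^ 2 / 2) := (exp_add _ _).symm

end Real

section

variable {Ω : Type*} {m₀ : MeasurableSpace Ω} {P : Measure Ω}

lemma condExp_exp_mul_le [IsFiniteMeasure P] {m : MeasurableSpace Ω} (hm : m ≤ m₀)
    {X : Ω → ℝ} {a b t : ℝ} (ha : 0 ≤ a) (hb : 0 < b) (ht : 0 ≤ t) (hX : Integrable X P)
    (hcond : ∀ᵐ ω ∂P, P[X | m] ω ≤ a) (hbdd : ∀ᵐ ω ∂P, |X ω| ≤ b) :
    ∀ᵐ ω ∂P, P[fun ω ↦ exp (t * X ω) | m] ω ≤ exp (t * a + t ^ 2 * b ^ 2 / 2) := by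
  set x := t * b
  have hx : 0 ≤ x := mul_nonneg ht hb.le
  have hslope : 0 ≤ sinh x / b := div_nonneg (sinh_nonneg_iff.2 hx) hb.le
  -- the chord of `exp` over `[-x, x]`, as a function of `X = b * (X / b)`
  set φ : Ω → ℝ := (fun _ ↦ cosh x) + (sinh x / b) • X
  have hdom : (fun ω ↦ exp (t * X ω)) ≤ᵐ[P] φ := by
    filter_upwards [hbdd] with ω hω
    have hy : |X ω / b| ≤ 1 := by rwa [abs_div, abs_of_pos hb, div_le_one hb]
    convert exp_mul_le_cosh_add_mul_sinh hy x using 2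
    · simp only [x]; field_simp
    · simp only [φ, Pi.add_apply, Pi.smul_apply, smul_eq_mul]; ring
  have hexp : Integrable (fun ω ↦ exp (t * X ω)) P :=
    integrable_exp_mul_of_mem_Icc hX.aemeasurable
      (hbdd.mono fun ω hω ↦ Set.mem_Icc.2 (abs_le.1 hω))
  have hlin : P[φ | m] =ᵐ[P] (fun _ ↦ cosh x) + (sinh x / b) • P[X | m] :=
    (condExp_add (integrable_const _) (hX.smul _) m).trans
      ((EventuallyEq.of_eq (condExp_const hm _)).add (condExp_smul _ _ _))
  filter_upwards [condExp_mono hexp ((integrable_const _).add (hX.smul _)) hdom, hlin, hcond]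
    with ω hmono hlinω hcondω
  calc P[fun ω ↦ exp (t * X ω) | m] ω ≤ cosh x + sinh x / b * P[X | m] ω :=
        hmono.trans_eq hlinω
    _ ≤ cosh x + sinh x / b * a := by gcongr
    _ = cosh x + a / b * sinh x := by rw [div_mul_comm]
    _ ≤ exp (a / b * x + x ^ 2 / 2) := cosh_add_mul_sinh_le_exp (div_nonneg ha hb.le) hx
    _ = exp (t * a + t ^ 2 * b ^ 2 / 2) := by congr 1; field_simp; ring

lemma integrable_exp_mul_sum_of_abs_le [IsFiniteMeasure P] {ι : Type*} {s : Finset ι}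
    {X : ι → Ω → ℝ} {C : ι → ℝ} (hX : ∀ i ∈ s, AEMeasurable (X i) P)
    (hbdd : ∀ i ∈ s, ∀ᵐ ω ∂P, |X i ω| ≤ C i) (t : ℝ) :
    Integrable (fun ω ↦ exp (t * ∑ i ∈ s, X i ω)) P := by
  refine integrable_exp_mul_of_mem_Icc (s.aemeasurable_fun_sum hX)
    (a := -∑ i ∈ s, C i) (b := ∑ i ∈ s, C i) ?_
  filter_upwards [(eventually_all_finset s).2 hbdd] with ω hω
  exact abs_le.1 ((abs_sum_le_sum_abs _ _).trans (sum_le_sum hω))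

lemma integral_exp_sum_Icc_le [IsZeroOrProbabilityMeasure P] {ℱ : Filtration ℕ m₀}
    {X : ℕ → Ω → ℝ} {b c : ℕ → ℝ} (hX : ∀ i, StronglyMeasurable[ℱ i] (X i)) (n : ℕ)
    (hbdd : ∀ i ∈ Icc 1 n, ∀ᵐ ω ∂P, |X i ω| ≤ b i)
    (hcond : ∀ i ∈ Icc 1 n, ∀ᵐ ω ∂P, P[fun ω ↦ exp (X i ω) | ℱ (i - 1)] ω ≤ exp (c i)) :
    ∫ ω, exp (∑ i ∈ Icc 1 n, X i ω) ∂P ≤ exp (∑ i ∈ Icc 1 n, c i) := by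
  have hexp_int (n : ℕ) (h : ∀ i ∈ Icc 1 n, ∀ᵐ ω ∂P, |X i ω| ≤ b i) :
      Integrable (fun ω ↦ exp (∑ i ∈ Icc 1 n, X i ω)) P := by
    simpa only [one_mul] using integrable_exp_mul_sum_of_abs_le
      (fun i _ ↦ ((hX i).mono (ℱ.le i)).measurable.aemeasurable) h 1
  induction n with
  | zero => simp
  | succ n ih =>
    have hsub : Icc 1 n ⊆ Icc 1 (n + 1) := Icc_subset_Icc_right n.le_succ
    have hn : n + 1 ∈ Icc 1 (n + 1) := by simp
    have hcond_n := hcond (n + 1) hn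
    rw [Nat.add_sub_cancel] at hcond_n
    set F := fun ω ↦ exp (∑ i ∈ Icc 1 n, X i ω)
    set G := fun ω ↦ exp (X (n + 1) ω)
    have hF : StronglyMeasurable[ℱ n] F :=
      (measurable_exp.comp (Finset.measurable_fun_sum _ fun i hi ↦
        ((hX i).mono (ℱ.mono (mem_Icc.1 hi).2)).measurable)).stronglyMeasurable
    have hFint : Integrable F P := hexp_int n fun i hi ↦ hbdd i (hsub hi)
    have hFG : Integrable (F * G) P := by
      have := hexp_int (n + 1) hbdd
      simp_rw [sum_Icc_succ_top (by omega : 1 ≤ n + 1), exp_add] at this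
      exact this
    have hG : Integrable G P := by
      simpa using integrable_exp_mul_sum_of_abs_le (s := {n + 1})
        (fun i _ ↦ ((hX i).mono (ℱ.le i)).measurable.aemeasurable)
        (by simpa using hbdd (n + 1) hn) 1
    simp_rw [sum_Icc_succ_top (by omega : 1 ≤ n + 1), exp_add]
    calc ∫ ω, F ω * G ω ∂P = ∫ ω, F ω * P[G | ℱ n] ω ∂P := by
          rw [← integral_condExp (ℱ.le n)]
          exact integral_congr_ae (condExp_mul_of_stronglyMeasurable_left hF hFG hG)
      _ ≤ ∫ ω, F ω * exp (c (n + 1)) ∂P := by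
          refine integral_mono_ae (integrable_condExp.congr
            (condExp_mul_of_stronglyMeasurable_left hF hFG hG)) (hFint.mul_const _) ?_
          filter_upwards [hcond_n] with ω hω
          exact mul_le_mul_of_nonneg_left hω (exp_pos _).le
      _ = (∫ ω, F ω ∂P) * exp (c (n + 1)) := integral_mul_const _ _
      _ ≤ exp (∑ i ∈ Icc 1 n, c i) * exp (c (n + 1)) := by
          gcongr
          exact ih (fun i hi ↦ hbdd i (hsub hi)) (fun i hi ↦ hcond i (hsub hi))

lemma measure_gt_add_mul_sqrt_le_exp [IsFiniteMeasure P] {X : Ω → ℝ} {m v γ : ℝ} (hv : 0 < v)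
    (hγ : 0 ≤ γ) (hint : ∀ t, 0 ≤ t → Integrable (fun ω ↦ exp (t * X ω)) P)
    (hmgf : ∀ t, 0 ≤ t → mgf X P t ≤ exp (t * m + t ^ 2 * v / 2)) :
    P {ω | m + γ * √v < X ω} ≤ ENNReal.ofReal (exp (-γ ^ 2 / 2)) := by
  have hσ : 0 < √v := sqrt_pos.2 hv
  set t := γ / √v
  have ht : 0 ≤ t := div_nonneg hγ hσ.le
  have hexponent : -t * (m + γ * √v) + (t * m + t ^ 2 * v / 2) = -γ ^ 2 / 2 := by
    simp only [t, div_pow, sq_sqrt hv.le]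
    field_simp
    ring
  calc P {ω | m + γ * √v < X ω} ≤ P {ω | m + γ * √v ≤ X ω} :=
        measure_mono (Set.ofPred_subset_ofPred.2 fun _ ↦ le_of_lt)
    _ = ENNReal.ofReal (P.real {ω | m + γ * √v ≤ X ω}) :=
        (ofReal_measureReal (measure_ne_top _ _)).symm
    _ ≤ ENNReal.ofReal (exp (-γ ^ 2 / 2)) := by
        refine ENNReal.ofReal_le_ofReal ((measure_ge_le_exp_mul_mgf _ ht (hint t ht)).trans ?_)
        rw [← hexponent, exp_add]
        gcongr
        exact hmgf t ht

lemma mgf_sum_Icc_le [IsZeroOrProbabilityMeasure P] {ℱ : Filtration ℕ m₀} {ψ : ℕ → Ω → ℝ}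
    {μ ν : ℕ → ℝ} {n : ℕ} (hμ : ∀ i, 0 ≤ μ i) (hν : ∀ i, 0 < ν i)
    (hmeas : ∀ i, StronglyMeasurable[ℱ i] (ψ i)) (hint : ∀ i, Integrable (ψ i) P)
    (hcond : ∀ i ∈ Icc 1 n, ∀ᵐ ω ∂P, P[ψ i | ℱ (i - 1)] ω ≤ μ i)
    (hbdd : ∀ i ∈ Icc 1 n, ∀ᵐ ω ∂P, |ψ i ω| ≤ ν i) {t : ℝ} (ht : 0 ≤ t) :
    mgf (fun ω ↦ ∑ i ∈ Icc 1 n, ψ i ω) P t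
      ≤ exp (t * ∑ i ∈ Icc 1 n, μ i + t ^ 2 * (∑ i ∈ Icc 1 n, ν i ^ 2) / 2) := by
  have hsum : t * ∑ i ∈ Icc 1 n, μ i + t ^ 2 * (∑ i ∈ Icc 1 n, ν i ^ 2) / 2
      = ∑ i ∈ Icc 1 n, (t * μ i + t ^ 2 * ν i ^ 2 / 2) := by
    rw [sum_add_distrib, mul_sum, mul_sum, sum_div]
  rw [mgf, hsum]
  simp_rw [mul_sum]
  refine integral_exp_sum_Icc_le (fun i ↦ (hmeas i).const_mul t) n (b := fun i ↦ t * ν i)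
    (fun i hi ↦ (hbdd i hi).mono fun ω hω ↦ ?_) fun i hi ↦
      condExp_exp_mul_le (ℱ.le _) (hμ i) (hν i) ht (hint i) (hcond i hi) (hbdd i hi)
  rw [abs_mul, abs_of_nonneg ht]
  exact mul_le_mul_of_nonneg_left hω ht

end

theorem martingale_deviation_bounded {Ω : Type*} {m0 : MeasurableSpace Ω}
    (P : Measure Ω) [IsProbabilityMeasure P] (ℱ : Filtration ℕ m0)
    (N : ℕ) (ψ : ℕ → Ω → ℝ) (μ ν : ℕ → ℝ) (hμ : ∀ i, 0 ≤ μ i) (hν : ∀ i, 0 < ν i)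
    (hmeas : ∀ i, StronglyMeasurable[ℱ i] (ψ i))
    (hint : ∀ i, Integrable (ψ i) P)
    (hcond : ∀ i ∈ Finset.Icc 1 N, ∀ᵐ ω ∂P, (P[ψ i | ℱ (i - 1)]) ω ≤ μ i)
    (hbdd : ∀ i ∈ Finset.Icc 1 N, ∀ᵐ ω ∂P, |ψ i ω| ≤ ν i)
    (γ : ℝ) (hγ : 0 ≤ γ) :
    P {ω | ∑ i ∈ Finset.Icc 1 N, ψ i ω >
        ∑ i ∈ Finset.Icc 1 N, μ i + γ * Real.sqrt (∑ i ∈ Finset.Icc 1 N, (ν i) ^ 2)} ≤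
      ENNReal.ofReal (Real.exp (-γ ^ 2 / 2)) := by
  rcases N.eq_zero_or_pos with rfl | hN
  · simp
  have hv : 0 < ∑ i ∈ Icc 1 N, ν i ^ 2 :=
    sum_pos (fun i _ ↦ pow_pos (hν i) 2) (nonempty_Icc.2 hN)
  exact measure_gt_add_mul_sqrt_le_exp hv hγ
    (fun t _ ↦ integrable_exp_mul_sum_of_abs_le (fun i _ ↦ (hint i).aemeasurable) hbdd t)
    fun t ht ↦ mgf_sum_Icc_le hμ hν hmeas hint hcond hbdd ht
end

section
/- For 2 ≤ ρ < ∞, the function p(x) = ‖x‖_ρ² on ℝⁿ is continuously differentiable and satisfies p(x+y) ≤ p(x) + Dp(x)[y] + (ρ−1)·p(y) for all x, y ∈ ℝⁿ. -/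
/-
Along a line `u t = x + t • y` write `S = ∑ |u_i|^ρ` and `P = ∑ |u_i|^(ρ-2) u_i y_i`. Then
`φ t = ‖u t‖_ρ² = S^(2/ρ)` has `φ' = 2 S^(2/ρ-1) P`, and wherever `u t ≠ 0` (for all `t` but at
most one)
  `φ'' = 2 (2 - ρ) S^(2/ρ-2) P² + 2 (ρ - 1) S^(2/ρ-1) ∑ |u_i|^(ρ-2) y_i²`.
The first term is nonpositive since `ρ ≥ 2`, and Hölder with exponents `ρ/(ρ-2)` and `ρ/2` bounds
the second by `2 (ρ - 1) ‖y‖_ρ²`; so `φ'` minus a line of that slope is antitone, and the mean value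
theorem gives the inequality. The gradient is continuous at `0` because `|∂_i p x| ≤ 2 ‖x‖_ρ`.
-/

open Real Finset Filter Topology

theorem hasDerivAt_abs_rpow_mul_self {c : ℝ} (hc : 0 ≤ c) (s : ℝ) :
    HasDerivAt (fun s : ℝ => |s| ^ c * s) ((c + 1) * |s| ^ c) s := by
  rcases hc.eq_or_lt with rfl | hc
  · simpa using hasDerivAt_id' s
  rcases eq_or_ne s 0 with rfl | hs
  · rw [hasDerivAt_iff_tendsto_slope, abs_zero, zero_rpow hc.ne', mul_zero]
    have hlim : Tendsto (fun t : ℝ => |t| ^ c) (𝓝[≠] 0) (𝓝 0) := by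
      have := (continuous_abs.rpow_const fun _ => Or.inr hc.le).tendsto (0 : ℝ)
      simpa [zero_rpow hc.ne'] using this.mono_left nhdsWithin_le_nhds
    refine hlim.congr' (eventually_nhdsWithin_of_forall fun t ht => ?_)
    simp [slope_def_field, zero_rpow hc.ne', mul_div_assoc, div_self ht]
  · refine (((hasDerivAt_abs hs).rpow_const (p := c) (Or.inl (abs_ne_zero.mpr hs))).mul
      (hasDerivAt_id' s)).congr_deriv ?_
    have hsign : (SignType.sign s : ℝ) * s = |s| := sign_mul_self s
    rw [rpow_sub_one (abs_ne_zero.mpr hs)]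
    field_simp
    linear_combination c * hsign

theorem le_add_deriv_add_of_hasDerivAt_le {φ φ' : ℝ → ℝ} {K t₀ : ℝ}
    (hφ : ∀ t, HasDerivAt φ (φ' t) t) (hφ' : Continuous φ')
    (hφ'' : ∀ t ≠ t₀, ∃ d ≤ K, HasDerivAt φ' d t) :
    φ 1 ≤ φ 0 + φ' 0 + K / 2 := by
  set g : ℝ → ℝ := fun t => φ' t - K * t
  have hg : ∀ t ≠ t₀, ∃ d ≤ 0, HasDerivAt g d t := fun t ht => by
    obtain ⟨d, hdK, hd⟩ := hφ'' t ht
    exact ⟨d - K, by linarith, (hd.sub ((hasDerivAt_id' t).const_mul K)).congr_deriv (by ring)⟩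
  have hg_anti : ∀ s : Set ℝ, Convex ℝ s → t₀ ∉ interior s → AntitoneOn g s := by
    intro s hs ht₀
    refine antitoneOn_of_deriv_nonpos hs (by fun_prop) (fun t ht => ?_) fun t ht => ?_
    · obtain ⟨d, -, hd⟩ := hg t (ne_of_mem_of_not_mem ht ht₀)
      exact hd.differentiableAt.differentiableWithinAt
    · obtain ⟨d, hd0, hd⟩ := hg t (ne_of_mem_of_not_mem ht ht₀)
      rwa [hd.deriv]
  have hanti : Antitone g := AntitoneOn.Iic_union_Ici
    (hg_anti _ (convex_Iic t₀) (by simp)) (hg_anti _ (convex_Ici t₀) (by simp))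
  have hψ : ∀ t, HasDerivAt (fun t => φ t - K / 2 * t ^ 2) (g t) t := fun t => by
    refine ((hφ t).sub ((hasDerivAt_pow 2 t).const_mul (K / 2))).congr_deriv ?_
    push_cast; ring
  obtain ⟨c, hc, hslope⟩ := exists_hasDerivAt_eq_slope _ g zero_lt_one
    (fun t _ => (hψ t).continuousAt.continuousWithinAt) fun t _ => hψ t
  have := hanti hc.1.le
  simp only [g] at this hslope
  norm_num at hslope
  linarith

theorem hasDerivAt_add_smul {E : Type*} [NormedAddCommGroup E] [NormedSpace ℝ E] (x y : E)
    (t : ℝ) : HasDerivAt (fun t : ℝ => x + t • y) y t := by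
  simpa using ((hasDerivAt_id' t).smul_const y).const_add x

theorem exists_forall_ne_add_smul_ne_zero {K E : Type*} [Field K] [AddCommGroup E] [Module K E]
    (x : E) {y : E} (hy : y ≠ 0) : ∃ t₀ : K, ∀ t ≠ t₀, x + t • y ≠ 0 := by
  by_cases h : ∃ s : K, x + s • y = 0
  · obtain ⟨s, hs⟩ := h
    refine ⟨s, fun t hts ht => hts ?_⟩
    have : (t - s) • y = 0 := by
      rw [sub_smul, ← add_sub_add_left_eq_sub _ _ x, ht, hs, sub_zero]
    exact sub_eq_zero.mp ((smul_eq_zero.mp this).resolve_right hy)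
  · exact ⟨0, fun t _ ht => h ⟨t, ht⟩⟩

noncomputable section

variable {ι : Type*} [Fintype ι] {ρ : ℝ}

def sumAbsRpow (ρ : ℝ) (x : ι → ℝ) : ℝ := ∑ i, |x i| ^ ρ

def lpNormSq (ρ : ℝ) (x : ι → ℝ) : ℝ := sumAbsRpow ρ x ^ (2 / ρ)

def lpNormSqGrad (ρ : ℝ) (x : ι → ℝ) (i : ι) : ℝ :=
  2 * sumAbsRpow ρ x ^ (2 / ρ - 1) * (|x i| ^ (ρ - 2) * x i)

def lpNormSqDeriv (ρ : ℝ) (x : ι → ℝ) : (ι → ℝ) →L[ℝ] ℝ :=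
  ∑ i, lpNormSqGrad ρ x i • ContinuousLinearMap.proj i

theorem sumAbsRpow_nonneg (x : ι → ℝ) : 0 ≤ sumAbsRpow ρ x :=
  sum_nonneg fun _ _ => rpow_nonneg (abs_nonneg _) _

theorem sumAbsRpow_zero (hρ : ρ ≠ 0) : sumAbsRpow ρ (0 : ι → ℝ) = 0 := by
  simp only [sumAbsRpow, Pi.zero_apply, abs_zero, zero_rpow hρ, sum_const_zero]

theorem sumAbsRpow_pos {x : ι → ℝ} (hx : x ≠ 0) : 0 < sumAbsRpow ρ x := by
  obtain ⟨i, hi⟩ := Function.ne_iff.mp hx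
  exact sum_pos' (fun j _ => rpow_nonneg (abs_nonneg _) _)
    ⟨i, mem_univ i, rpow_pos_of_pos (abs_pos.mpr hi) ρ⟩

theorem continuous_sumAbsRpow (hρ : 0 ≤ ρ) : Continuous (sumAbsRpow (ι := ι) ρ) :=
  continuous_finsetSum _ fun i _ => (continuous_apply i).abs.rpow_const fun _ => Or.inr hρ

theorem abs_le_sumAbsRpow_rpow (hρ : 0 < ρ) (x : ι → ℝ) (i : ι) :
    |x i| ≤ sumAbsRpow ρ x ^ (1 / ρ) := by
  have hterm : |x i| ^ ρ ≤ sumAbsRpow ρ x :=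
    single_le_sum (f := fun j => |x j| ^ ρ) (fun j _ => rpow_nonneg (abs_nonneg _) _) (mem_univ i)
  calc |x i| = (|x i| ^ ρ) ^ (1 / ρ) := by
        rw [← rpow_mul (abs_nonneg _), mul_one_div_cancel hρ.ne', rpow_one]
    _ ≤ sumAbsRpow ρ x ^ (1 / ρ) := by gcongr

theorem sumAbsRpow_le_card_mul_norm_rpow (hρ : 0 ≤ ρ) (x : ι → ℝ) :
    sumAbsRpow ρ x ≤ Fintype.card ι * ‖x‖ ^ ρ := by
  calc sumAbsRpow ρ x ≤ ∑ _i : ι, ‖x‖ ^ ρ :=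
        sum_le_sum fun i _ => rpow_le_rpow (abs_nonneg _) (norm_le_pi_norm x i) hρ
    _ = Fintype.card ι * ‖x‖ ^ ρ := by simp

theorem lpNormSq_le_card_rpow_mul_norm_sq (hρ : 0 < ρ) (x : ι → ℝ) :
    lpNormSq ρ x ≤ (Fintype.card ι : ℝ) ^ (2 / ρ) * ‖x‖ ^ 2 := by
  calc lpNormSq ρ x ≤ (Fintype.card ι * ‖x‖ ^ ρ) ^ (2 / ρ) :=
        rpow_le_rpow (sumAbsRpow_nonneg x) (sumAbsRpow_le_card_mul_norm_rpow hρ.le x)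
          (by positivity)
    _ = (Fintype.card ι : ℝ) ^ (2 / ρ) * ‖x‖ ^ 2 := by
        rw [mul_rpow (by positivity) (by positivity), ← rpow_mul (norm_nonneg x),
          mul_div_cancel₀ _ hρ.ne', rpow_two]

theorem hasFDerivAt_sumAbsRpow (hρ : 1 < ρ) (x : ι → ℝ) :
    HasFDerivAt (sumAbsRpow ρ)
      (∑ i, (ρ * |x i| ^ (ρ - 2) * x i) • (ContinuousLinearMap.proj i : (ι → ℝ) →L[ℝ] ℝ))
      x :=
  HasFDerivAt.fun_sum fun i _ => (hasDerivAt_abs_rpow (x i) hρ).comp_hasFDerivAt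
    (f := fun x : ι → ℝ => x i) x (hasFDerivAt_apply i x)

theorem lpNormSqDeriv_apply (x y : ι → ℝ) :
    lpNormSqDeriv ρ x y =
      2 * sumAbsRpow ρ x ^ (2 / ρ - 1) * ∑ i, |x i| ^ (ρ - 2) * x i * y i := by
  simp [lpNormSqDeriv, lpNormSqGrad, mul_sum, mul_assoc]

theorem lpNormSqDeriv_zero : lpNormSqDeriv ρ (0 : ι → ℝ) = 0 := by
  ext y; simp [lpNormSqDeriv_apply]

theorem hasFDerivAt_lpNormSq (hρ : 2 ≤ ρ) (x : ι → ℝ) :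
    HasFDerivAt (lpNormSq ρ) (lpNormSqDeriv ρ x) x := by
  rcases eq_or_ne x 0 with rfl | hx
  · rw [lpNormSqDeriv_zero]
    refine Asymptotics.IsBigO.hasFDerivAt (n := 2) ?_ one_lt_two
    refine Asymptotics.IsBigO.of_bound ((Fintype.card ι : ℝ) ^ (2 / ρ)) (Eventually.of_forall
      fun y => ?_)
    rw [sub_zero, norm_pow, norm_norm, lpNormSq,
      Real.norm_of_nonneg (rpow_nonneg (sumAbsRpow_nonneg y) _)]
    exact lpNormSq_le_card_rpow_mul_norm_sq (by linarith) y
  · have hS := sumAbsRpow_pos (ρ := ρ) hx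
    refine ((hasDerivAt_rpow_const (Or.inl hS.ne')).comp_hasFDerivAt x
      (hasFDerivAt_sumAbsRpow (by linarith) x)).congr_fderiv ?_
    ext y
    simp only [lpNormSqDeriv_apply, _root_.smul_apply, _root_.sum_apply,
      ContinuousLinearMap.proj_apply, smul_eq_mul, mul_sum]
    refine sum_congr rfl fun i _ => ?_
    field_simp

theorem abs_lpNormSqGrad_le (hρ : 1 < ρ) (x : ι → ℝ) (i : ι) :
    |lpNormSqGrad ρ x i| ≤ 2 * sumAbsRpow ρ x ^ (1 / ρ) := by
  have hS := sumAbsRpow_nonneg (ρ := ρ) x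
  calc |lpNormSqGrad ρ x i| = 2 * sumAbsRpow ρ x ^ (2 / ρ - 1) * |x i| ^ (ρ - 1) := by
        rw [lpNormSqGrad, abs_mul, abs_mul, abs_mul, abs_two, abs_of_nonneg (rpow_nonneg hS _),
          abs_of_nonneg (rpow_nonneg (abs_nonneg _) _), mul_assoc, ← rpow_add_one' (abs_nonneg _)
          (by linarith), show ρ - 2 + 1 = ρ - 1 by ring, mul_assoc]
    _ ≤ 2 * sumAbsRpow ρ x ^ (2 / ρ - 1) * (sumAbsRpow ρ x ^ (1 / ρ)) ^ (ρ - 1) := by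
        gcongr
        exact abs_le_sumAbsRpow_rpow (by linarith) x i
    _ = 2 * sumAbsRpow ρ x ^ (1 / ρ) := by
        have hexp : 2 / ρ - 1 + 1 / ρ * (ρ - 1) = 1 / ρ := by field_simp; ring
        rw [mul_assoc, ← rpow_mul hS, ← rpow_add' hS (by rw [hexp]; positivity), hexp]

theorem continuous_lpNormSqGrad (hρ : 2 ≤ ρ) (i : ι) :
    Continuous fun x => lpNormSqGrad ρ x i := by
  have hS := continuous_sumAbsRpow (ι := ι) (by linarith : 0 ≤ ρ)
  refine continuous_iff_continuousAt.2 fun x₀ => ?_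
  rcases eq_or_ne x₀ 0 with rfl | hx₀
  · have hlim :
        Tendsto (fun x : ι → ℝ => 2 * sumAbsRpow ρ x ^ (1 / ρ)) (𝓝 0) (𝓝 0) := by
      have := ((hS.rpow_const fun _ => Or.inr (by positivity : 0 ≤ 1 / ρ)).const_mul 2).tendsto 0
      rwa [sumAbsRpow_zero (by linarith), zero_rpow (by positivity), mul_zero] at this
    have hG : lpNormSqGrad ρ 0 i = 0 := by simp [lpNormSqGrad]
    rw [ContinuousAt, hG]
    exact squeeze_zero_norm (fun x => abs_lpNormSqGrad_le (by linarith) x i) hlim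
  · have hpow : Continuous fun x : ι → ℝ => |x i| ^ (ρ - 2) * x i :=
      ((continuous_apply i).abs.rpow_const fun _ => Or.inr (by linarith)).mul (continuous_apply i)
    exact (continuousAt_const.mul (hS.continuousAt.rpow_const
      (Or.inl (sumAbsRpow_pos hx₀).ne'))).mul hpow.continuousAt

theorem continuous_lpNormSqDeriv (hρ : 2 ≤ ρ) : Continuous (lpNormSqDeriv (ι := ι) ρ) :=
  continuous_finsetSum _ fun i _ => (continuous_lpNormSqGrad hρ i).smul continuous_const

theorem contDiff_lpNormSq (hρ : 2 ≤ ρ) : ContDiff ℝ 1 (lpNormSq (ι := ι) ρ) := by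
  refine contDiff_one_iff_fderiv.2 ⟨fun x => (hasFDerivAt_lpNormSq hρ x).differentiableAt, ?_⟩
  have hD : fderiv ℝ (lpNormSq ρ) = lpNormSqDeriv (ι := ι) ρ :=
    funext fun x => (hasFDerivAt_lpNormSq hρ x).fderiv
  rw [hD]
  exact continuous_lpNormSqDeriv hρ

theorem sum_abs_rpow_mul_sq_le (hρ : 2 ≤ ρ) (u y : ι → ℝ) :
    ∑ i, |u i| ^ (ρ - 2) * y i ^ 2 ≤
      sumAbsRpow ρ u ^ ((ρ - 2) / ρ) * sumAbsRpow ρ y ^ (2 / ρ) := by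
  rcases hρ.eq_or_lt with rfl | hρ
  · simp [sumAbsRpow]
  have hpq : HolderConjugate (ρ / (ρ - 2)) (ρ / 2) := by
    rw [holderConjugate_iff]
    constructor
    · rw [lt_div_iff₀ (by linarith)]; linarith
    · field_simp; ring
  have hu : ∑ i, (|u i| ^ (ρ - 2)) ^ (ρ / (ρ - 2)) = sumAbsRpow ρ u :=
    sum_congr rfl fun i _ => by
      rw [← rpow_mul (abs_nonneg _), mul_div_cancel₀ _ (by linarith)]
  have hy : ∑ i, (y i ^ 2) ^ (ρ / 2) = sumAbsRpow ρ y :=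
    sum_congr rfl fun i _ => by
      rw [← sq_abs, ← rpow_two, ← rpow_mul (abs_nonneg _), mul_div_cancel₀ _ two_ne_zero]
  have := inner_le_Lp_mul_Lq_of_nonneg univ (f := fun i => |u i| ^ (ρ - 2))
    (g := fun i => y i ^ 2) hpq (fun i _ => rpow_nonneg (abs_nonneg (u i)) _)
    (fun i _ => sq_nonneg (y i))
  rwa [hu, hy, one_div_div, one_div_div] at this

theorem hasDerivAt_sumAbsRpow_add_smul (hρ : 1 < ρ) (x y : ι → ℝ) (t : ℝ) :
    HasDerivAt (fun t => sumAbsRpow ρ (x + t • y))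
      (ρ * ∑ i, |(x + t • y) i| ^ (ρ - 2) * (x + t • y) i * y i) t := by
  refine ((hasFDerivAt_sumAbsRpow hρ _).comp_hasDerivAt t
    (hasDerivAt_add_smul x y t)).congr_deriv ?_
  simp only [_root_.smul_apply, _root_.sum_apply, ContinuousLinearMap.proj_apply, smul_eq_mul,
    mul_sum]
  exact sum_congr rfl fun i _ => by ring

theorem hasDerivAt_sum_abs_rpow_mul_add_smul (hρ : 2 ≤ ρ) (x y : ι → ℝ) (t : ℝ) :
    HasDerivAt (fun t => ∑ i, |(x + t • y) i| ^ (ρ - 2) * (x + t • y) i * y i)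
      ((ρ - 1) * ∑ i, |(x + t • y) i| ^ (ρ - 2) * y i ^ 2) t := by
  refine (HasDerivAt.fun_sum fun i _ => ((hasDerivAt_abs_rpow_mul_self (by linarith) _).comp t
    (hasDerivAt_pi.1 (hasDerivAt_add_smul x y t) i)).mul_const (y i)).congr_deriv ?_
  rw [mul_sum]
  exact sum_congr rfl fun i _ => by ring

theorem exists_hasDerivAt_lpNormSqDeriv_add_smul_le (hρ : 2 ≤ ρ) {x y : ι → ℝ} {t : ℝ}
    (ht : x + t • y ≠ 0) :
    ∃ d ≤ 2 * (ρ - 1) * lpNormSq ρ y,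
      HasDerivAt (fun t => lpNormSqDeriv ρ (x + t • y) y) d t := by
  set u := x + t • y
  set P := ∑ i, |u i| ^ (ρ - 2) * u i * y i
  set W := ∑ i, |u i| ^ (ρ - 2) * y i ^ 2
  have hS := sumAbsRpow_pos (ρ := ρ) ht
  have hderiv : HasDerivAt (fun t => lpNormSqDeriv ρ (x + t • y) y)
      (2 * (ρ * P * (2 / ρ - 1) * sumAbsRpow ρ u ^ (2 / ρ - 1 - 1)) * P
        + 2 * sumAbsRpow ρ u ^ (2 / ρ - 1) * ((ρ - 1) * W)) t := by
    simp only [lpNormSqDeriv_apply]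
    exact (((hasDerivAt_sumAbsRpow_add_smul (by linarith) x y t).rpow_const (p := 2 / ρ - 1)
      (Or.inl hS.ne')).const_mul 2).fun_mul (hasDerivAt_sum_abs_rpow_mul_add_smul hρ x y t)
  refine ⟨_, ?_, hderiv⟩
  have hfirst : 2 * (ρ * P * (2 / ρ - 1) * sumAbsRpow ρ u ^ (2 / ρ - 1 - 1)) * P ≤ 0 := by
    have h2ρ : 2 / ρ - 1 ≤ 0 := by rw [sub_nonpos, div_le_one (by linarith)]; exact hρ
    have := rpow_nonneg hS.le (2 / ρ - 1 - 1)
    nlinarith [mul_nonpos_of_nonpos_of_nonneg h2ρ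
      (by positivity : 0 ≤ 2 * ρ * sumAbsRpow ρ u ^ (2 / ρ - 1 - 1) * P ^ 2)]
  have hsecond : sumAbsRpow ρ u ^ (2 / ρ - 1) * W ≤ lpNormSq ρ y := by
    calc sumAbsRpow ρ u ^ (2 / ρ - 1) * W
        ≤ sumAbsRpow ρ u ^ (2 / ρ - 1) *
            (sumAbsRpow ρ u ^ ((ρ - 2) / ρ) * sumAbsRpow ρ y ^ (2 / ρ)) :=
          mul_le_mul_of_nonneg_left (sum_abs_rpow_mul_sq_le hρ u y) (rpow_nonneg hS.le _)
      _ = lpNormSq ρ y := by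
          rw [← mul_assoc, ← rpow_add hS,
            show 2 / ρ - 1 + (ρ - 2) / ρ = 0 by field_simp; ring, rpow_zero, one_mul, lpNormSq]
  nlinarith [mul_le_mul_of_nonneg_left hsecond (by linarith : (0 : ℝ) ≤ 2 * (ρ - 1))]

theorem lpNormSq_add_le (hρ : 2 ≤ ρ) (x y : ι → ℝ) :
    lpNormSq ρ (x + y) ≤ lpNormSq ρ x + lpNormSqDeriv ρ x y + (ρ - 1) * lpNormSq ρ y := by
  rcases eq_or_ne y 0 with rfl | hy
  · simp [lpNormSq, sumAbsRpow_zero (by linarith : ρ ≠ 0),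
      zero_rpow (by positivity : 2 / ρ ≠ 0)]
  obtain ⟨t₀, ht₀⟩ := exists_forall_ne_add_smul_ne_zero (K := ℝ) x hy
  have key := le_add_deriv_add_of_hasDerivAt_le
    (fun t => (hasFDerivAt_lpNormSq hρ _).comp_hasDerivAt (f := fun t : ℝ => x + t • y) t
      (hasDerivAt_add_smul x y t))
    (((continuous_lpNormSqDeriv hρ).comp (by fun_prop)).clm_apply continuous_const)
    (fun t ht => exists_hasDerivAt_lpNormSqDeriv_add_smul_le hρ (ht₀ t ht))
  simp only [Function.comp_apply, one_smul, zero_smul, add_zero] at key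
  linarith

end

theorem lp_norm_sq_smooth (n : ℕ) (ρ : ℝ) (hρ : 2 ≤ ρ)
    (p : (Fin n → ℝ) → ℝ)
    (hp : p = fun x => ((∑ i, |x i| ^ ρ) ^ (1 / ρ)) ^ 2) :
    ContDiff ℝ 1 p ∧
      ∀ x y : Fin n → ℝ, p (x + y) ≤ p x + fderiv ℝ p x y + (ρ - 1) * p y := by
  obtain rfl : p = lpNormSq ρ := by
    rw [hp]
    funext x
    rw [lpNormSq, sumAbsRpow, ← rpow_mul_natCast (sum_nonneg fun _ _ => by positivity)]
    ring_nf
  refine ⟨contDiff_lpNormSq hρ, fun x y => ?_⟩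
  rw [(hasFDerivAt_lpNormSq hρ x).fderiv]
  exact lpNormSq_add_le hρ x y
end

section
/- Let (E, ‖·‖) be finite-dimensional, f(x) = ‖x‖²/2 and f_*(ξ) = ‖ξ‖_*²/2 its Legendre transform. If for all ξ, η ∈ E* and x ∈ ∂f_*(ξ) one has f_*(ξ+η) ≥ f_*(ξ) + ⟨η, x⟩ + (1/(2κ))‖η‖_*², then f is continuously differentiable and f(x+y) ≤ f(x) + ⟨f'(x), y⟩ + (κ/2)‖y‖² for all x, y ∈ E. -/
/-!
Pick a duality map `g` (`g x x = ‖x‖²`, `‖g x‖ = ‖x‖`, by Hahn–Banach). Then `x ∈ ∂f_*(g x)` and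
`g x ∈ ∂f(x)`. The hypothesis applied between `g x` and `g (x + y)`, combined with the
Fenchel–Young equality at `x + y` and AM–GM, gives `f (x + y) ≤ f x + g x y + κ/2 ‖y‖²`; together
with the subgradient bound `f x + g x y ≤ f (x + y)` this forces `f' = g`. Applied in both
directions between `g x` and `g y`, the hypothesis makes `g` strongly monotone, hence `κ`-Lipschitz,
so `f'` is continuous.
-/

open Asymptotics Filter Topology

theorem hasFDerivAt_of_le_of_le {E : Type*} [NormedAddCommGroup E] [NormedSpace ℝ E]
    {φ : E → ℝ} {L : E →L[ℝ] ℝ} {x : E} (C : ℝ)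
    (hlower : ∀ h, φ x + L h ≤ φ (x + h)) (hupper : ∀ h, φ (x + h) ≤ φ x + L h + C * ‖h‖ ^ 2) :
    HasFDerivAt φ L x := by
  rw [hasFDerivAt_iff_isLittleO_nhds_zero]
  have hbigO : (fun h => φ (x + h) - φ x - L h) =O[𝓝 0] fun h : E => ‖h‖ ^ 2 := by
    refine IsBigO.of_bound |C| (Eventually.of_forall fun h => ?_)
    rw [Real.norm_eq_abs, abs_le, norm_pow, norm_norm]
    constructor <;> nlinarith [hlower h, hupper h, le_abs_self C, sq_nonneg ‖h‖]
  exact hbigO.trans_isLittleO (isLittleO_norm_pow_id one_lt_two)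

theorem lipschitzWith_of_strongly_convex_half_sq_opNorm {E : Type*} [NormedAddCommGroup E]
    [NormedSpace ℝ E] {g : E → E →L[ℝ] ℝ} {κ : ℝ} (hκ : 0 < κ)
    (hstrong : ∀ x (η : E →L[ℝ] ℝ), ‖g x‖ ^ 2 / 2 + η x + 1 / (2 * κ) * ‖η‖ ^ 2 ≤ ‖g x + η‖ ^ 2 / 2) :
    LipschitzWith κ.toNNReal g := by
  refine LipschitzWith.of_dist_le_mul fun y x => ?_
  rw [dist_eq_norm, dist_eq_norm, Real.coe_toNNReal _ hκ.le]
  set Δ := g y - g x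
  -- Adding the two strong-convexity inequalities between `g x` and `g y` gives strong monotonicity.
  have hxy := hstrong x Δ
  have hyx := hstrong y (-Δ)
  rw [add_sub_cancel] at hxy
  rw [norm_neg, show g y + -Δ = g x by simp [Δ]] at hyx
  have hmono : ‖Δ‖ ^ 2 ≤ κ * Δ (y - x) := by
    have hΔyx : Δ (y - x) = Δ y - Δ x := map_sub _ _ _
    have hhalf : κ * (1 / (2 * κ) * ‖Δ‖ ^ 2 + 1 / (2 * κ) * ‖Δ‖ ^ 2) = ‖Δ‖ ^ 2 := by
      field_simp; ring
    rw [neg_apply] at hyx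
    rw [← hhalf]
    exact mul_le_mul_of_nonneg_left (by linarith) hκ.le
  have hΔ : Δ (y - x) ≤ ‖Δ‖ * ‖y - x‖ := (le_abs_self _).trans (Δ.le_opNorm _)
  rcases (norm_nonneg Δ).eq_or_lt with h0 | hpos
  · rw [← h0]; positivity
  · nlinarith

def IsDualityMap {E : Type*} [NormedAddCommGroup E] [NormedSpace ℝ E]
    (g : E → E →L[ℝ] ℝ) : Prop :=
  ∀ x, g x x = ‖x‖ ^ 2 ∧ ‖g x‖ = ‖x‖

theorem exists_isDualityMap (E : Type*) [NormedAddCommGroup E] [NormedSpace ℝ E] :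
    ∃ g : E → E →L[ℝ] ℝ, IsDualityMap g := by
  suffices ∀ x : E, ∃ ξ : E →L[ℝ] ℝ, ξ x = ‖x‖ ^ 2 ∧ ‖ξ‖ = ‖x‖ from
    ⟨fun x => (this x).choose, fun x => (this x).choose_spec⟩
  intro x
  rcases eq_or_ne x 0 with rfl | hx
  · exact ⟨0, by simp, by simp⟩
  obtain ⟨ξ, hξ_norm, hξx⟩ := exists_dual_vector ℝ x (norm_ne_zero_iff.mpr hx)
  refine ⟨‖x‖ • ξ, ?_, ?_⟩
  · simp [hξx, sq]
  · rw [norm_smul, hξ_norm, norm_norm, mul_one]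

namespace IsDualityMap

variable {E : Type*} [NormedAddCommGroup E] [NormedSpace ℝ E] {g : E → E →L[ℝ] ℝ}

/-- `x ∈ ∂f_*(g x)` for `f_* = ‖·‖_*² / 2`. -/
theorem subgradient_dual (hg : IsDualityMap g) (x : E) (ζ : E →L[ℝ] ℝ) :
    ‖g x‖ ^ 2 / 2 + (ζ - g x) x ≤ ‖ζ‖ ^ 2 / 2 := by
  have hζx : ζ x ≤ ‖ζ‖ * ‖x‖ := (le_abs_self _).trans (ζ.le_opNorm x)
  rw [sub_apply, (hg x).1, (hg x).2]
  nlinarith [sq_nonneg (‖ζ‖ - ‖x‖)]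

/-- `g x ∈ ∂f(x)` for `f = ‖·‖² / 2`. -/
theorem half_sq_norm_add_ge (hg : IsDualityMap g) (x y : E) :
    ‖x‖ ^ 2 / 2 + g x y ≤ ‖x + y‖ ^ 2 / 2 := by
  have hxy : g x (x + y) ≤ ‖x‖ * ‖x + y‖ := by
    simpa only [(hg x).2] using (le_abs_self _).trans ((g x).le_opNorm (x + y))
  rw [map_add, (hg x).1] at hxy
  nlinarith [sq_nonneg (‖x‖ - ‖x + y‖)]

variable {κ : ℝ}

theorem half_sq_norm_add_le (hg : IsDualityMap g) (hκ : 0 < κ)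
    (hstrong : ∀ x (η : E →L[ℝ] ℝ), ‖g x‖ ^ 2 / 2 + η x + 1 / (2 * κ) * ‖η‖ ^ 2 ≤ ‖g x + η‖ ^ 2 / 2)
    (x y : E) : ‖x + y‖ ^ 2 / 2 ≤ ‖x‖ ^ 2 / 2 + g x y + κ / 2 * ‖y‖ ^ 2 := by
  set Δ := g (x + y) - g x
  have hstep := hstrong x Δ
  rw [add_sub_cancel, sub_apply, (hg x).1, (hg x).2, (hg (x + y)).2] at hstep
  -- Fenchel–Young equality at `x + y`.
  have hFY : g (x + y) x + g (x + y) y = ‖x + y‖ ^ 2 := by rw [← map_add, (hg (x + y)).1]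
  have hΔy : Δ y ≤ ‖Δ‖ * ‖y‖ := (le_abs_self _).trans (Δ.le_opNorm y)
  have hAMGM : ‖Δ‖ * ‖y‖ ≤ 1 / (2 * κ) * ‖Δ‖ ^ 2 + κ / 2 * ‖y‖ ^ 2 := by
    have := div_nonneg (sq_nonneg (‖Δ‖ - κ * ‖y‖)) (by positivity : (0 : ℝ) ≤ 2 * κ)
    have hexp : (‖Δ‖ - κ * ‖y‖) ^ 2 / (2 * κ)
        = 1 / (2 * κ) * ‖Δ‖ ^ 2 - ‖Δ‖ * ‖y‖ + κ / 2 * ‖y‖ ^ 2 := by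
      field_simp; ring
    linarith
  have hΔy' : Δ y = g (x + y) y - g x y := sub_apply _ _ _
  linarith

theorem hasFDerivAt_half_sq_norm (hg : IsDualityMap g) (hκ : 0 < κ)
    (hstrong : ∀ x (η : E →L[ℝ] ℝ), ‖g x‖ ^ 2 / 2 + η x + 1 / (2 * κ) * ‖η‖ ^ 2 ≤ ‖g x + η‖ ^ 2 / 2)
    (x : E) : HasFDerivAt (fun x : E => ‖x‖ ^ 2 / 2) (g x) x :=
  hasFDerivAt_of_le_of_le (κ / 2) (hg.half_sq_norm_add_ge x) (hg.half_sq_norm_add_le hκ hstrong x)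

end IsDualityMap

theorem smooth_of_dual_strong_convexity_general {E : Type*} [NormedAddCommGroup E] [NormedSpace ℝ E]
    (κ : ℝ) (hκ : 0 < κ)
    (f : E → ℝ) (hf : f = fun x => ‖x‖ ^ 2 / 2)
    (fs : (E →L[ℝ] ℝ) → ℝ) (hfs : fs = fun ξ => ‖ξ‖ ^ 2 / 2)
    (hsub : ∀ (ξ η : E →L[ℝ] ℝ) (x : E),
      (∀ ζ : E →L[ℝ] ℝ, fs ξ + (ζ - ξ) x ≤ fs ζ) →
        fs ξ + η x + 1 / (2 * κ) * ‖η‖ ^ 2 ≤ fs (ξ + η)) :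
    ContDiff ℝ 1 f ∧
      ∀ x y : E, f (x + y) ≤ f x + fderiv ℝ f x y + κ / 2 * ‖y‖ ^ 2 := by
  subst hf hfs
  obtain ⟨g, hg⟩ := exists_isDualityMap E
  have hstrong : ∀ x (η : E →L[ℝ] ℝ),
      ‖g x‖ ^ 2 / 2 + η x + 1 / (2 * κ) * ‖η‖ ^ 2 ≤ ‖g x + η‖ ^ 2 / 2 :=
    fun x η => hsub (g x) η x (hg.subgradient_dual x)
  have hderiv := hg.hasFDerivAt_half_sq_norm hκ hstrong
  have hfderiv : fderiv ℝ (fun x : E => ‖x‖ ^ 2 / 2) = g := funext fun x => (hderiv x).fderiv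
  refine ⟨contDiff_one_iff_fderiv.2 ⟨fun x => (hderiv x).differentiableAt, ?_⟩, ?_⟩
  · exact hfderiv ▸ (lipschitzWith_of_strongly_convex_half_sq_opNorm hκ hstrong).continuous
  · exact fun x y => hfderiv ▸ hg.half_sq_norm_add_le hκ hstrong x y

theorem smooth_of_dual_strong_convexity {E : Type*} [NormedAddCommGroup E] [NormedSpace ℝ E]
    [FiniteDimensional ℝ E] (κ : ℝ) (hκ : 0 < κ)
    (f : E → ℝ) (hf : f = fun x => ‖x‖ ^ 2 / 2)
    (fs : (E →L[ℝ] ℝ) → ℝ) (hfs : fs = fun ξ => ‖ξ‖ ^ 2 / 2)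
    (hsub : ∀ (ξ η : E →L[ℝ] ℝ) (x : E),
      (∀ ζ : E →L[ℝ] ℝ, fs ξ + (ζ - ξ) x ≤ fs ζ) →
        fs ξ + η x + 1 / (2 * κ) * ‖η‖ ^ 2 ≤ fs (ξ + η)) :
    ContDiff ℝ 1 f ∧
      ∀ x y : E, f (x + y) ≤ f x + fderiv ℝ f x y + κ / 2 * ‖y‖ ^ 2 :=
  smooth_of_dual_strong_convexity_general κ hκ f hf fs hfs hsub
end

section
/- Let (E, ‖·‖) be a κ-smooth finite-dimensional normed space, and let (ξ_i) be an E-valued martingale difference sequence satisfying ‖ξ_i‖ ≤ σ_i almost surely for deterministic σ_i > 0. Then for every N ≥ 1 and γ ≥ 0, Prob{ ‖Σ_{i=1}^N ξ_i‖ ≥ (√κ + γ)·sqrt(Σ_{i=1}^N σ_i²) } ≤ exp(−γ²/2). -/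
/-!
For `t, c ≥ 0` consider the potential `exp (t * √(‖x‖ ^ 2 + c))`. When an increment `ξ` with
`‖ξ‖ ≤ s` is added, smoothness and concavity of `√` give
`√(‖x + ξ‖ ^ 2 + c) ≤ √M + Dp(x)[ξ] / (2 √M)` with `M = ‖x‖ ^ 2 + c + κ s ^ 2`. The linear term
has conditional mean zero, so convexity of `exp` and `cosh u ≤ exp (u ^ 2 / 2)` show that the
increment costs a factor `exp (t ^ 2 s ^ 2 / 2)` while `κ s ^ 2` moves into the constant `c`.
Iterating from `c = 0` gives `E exp (t ‖S_N‖) ≤ exp (t √(κ v) + t ^ 2 v / 2)` with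
`v = ∑ σ_i ^ 2`, and Chernoff's bound at `t = γ / √v` gives the tail estimate.
-/

open MeasureTheory Filter Real Topology

namespace Real

theorem sqrt_le_sqrt_add_sub_div {a m : ℝ} (ha : 0 ≤ a) (hm : 0 < m) :
    √a ≤ √m + (a - m) / (2 * √m) := by
  have hr : 0 < √m := sqrt_pos.2 hm
  rw [← sub_le_iff_le_add', le_div_iff₀ (by positivity)]
  nlinarith [sq_nonneg (√a - √m), sq_sqrt ha, sq_sqrt hm.le]

theorem exp_mul_le_cosh_add_div_mul_sinh {s y : ℝ} (hs : 0 < s) (hy : |y| ≤ s) (t : ℝ) :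
    exp (t * y) ≤ cosh (t * s) + y / s * sinh (t * s) := by
  obtain ⟨hy₁, hy₂⟩ := abs_le.1 hy
  have h := convexOn_exp.2 (Set.mem_univ (t * s)) (Set.mem_univ (-(t * s)))
    (show 0 ≤ (s + y) / (2 * s) from div_nonneg (by linarith) (by positivity))
    (show 0 ≤ (s - y) / (2 * s) from div_nonneg (by linarith) (by positivity))
    (show (s + y) / (2 * s) + (s - y) / (2 * s) = 1 by field_simp; ring)
  rw [smul_eq_mul, smul_eq_mul, smul_eq_mul, smul_eq_mul] at h
  calc exp (t * y) = exp ((s + y) / (2 * s) * (t * s) + (s - y) / (2 * s) * -(t * s)) := by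
        congr 1; field_simp; ring
    _ ≤ _ := h
    _ = cosh (t * s) + y / s * sinh (t * s) := by
        rw [cosh_eq, sinh_eq]; field_simp; ring

end Real

section

variable {E : Type*} [NormedAddCommGroup E] [NormedSpace ℝ E]

theorem ContinuousLinearMap.norm_le_two_mul_of_sq_norm_add_le {κ : ℝ} {x : E} {ℓ : E →L[ℝ] ℝ}
    (hℓ : ∀ y, ‖x + y‖ ^ 2 ≤ ‖x‖ ^ 2 + ℓ y + κ * ‖y‖ ^ 2) : ‖ℓ‖ ≤ 2 * ‖x‖ := by
  have hlower : ∀ y, -(2 * ‖x‖ * ‖y‖) ≤ ℓ y := by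
    intro y
    have hτ_bound : ∀ τ : ℝ, 0 < τ → -(2 * ‖x‖ * ‖y‖) + (1 - κ) * ‖y‖ ^ 2 * τ ≤ ℓ y := by
      intro τ hτ
      have h := hℓ (τ • y)
      have hreverse : (‖x‖ - τ * ‖y‖) ^ 2 ≤ ‖x + τ • y‖ ^ 2 := by
        have := abs_norm_sub_norm_le x (-(τ • y))
        rw [sub_neg_eq_add, norm_neg, norm_smul, norm_of_nonneg hτ.le] at this
        exact sq_le_sq' (abs_le.1 this).1 (abs_le.1 this).2
      rw [map_smul, smul_eq_mul, norm_smul, norm_of_nonneg hτ.le] at h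
      have : τ * (-(2 * ‖x‖ * ‖y‖) + (1 - κ) * ‖y‖ ^ 2 * τ) ≤ τ * ℓ y := by nlinarith
      exact le_of_mul_le_mul_left this hτ
    have hlim : Tendsto (fun τ : ℝ => -(2 * ‖x‖ * ‖y‖) + (1 - κ) * ‖y‖ ^ 2 * τ)
        (𝓝[>] 0) (𝓝 (-(2 * ‖x‖ * ‖y‖))) := by
      refine tendsto_nhdsWithin_of_tendsto_nhds (Continuous.tendsto' ?_ 0 _ (by simp))
      fun_prop
    exact le_of_tendsto hlim (eventually_nhdsWithin_of_forall hτ_bound)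
  refine ContinuousLinearMap.opNorm_le_bound _ (by positivity) fun y => ?_
  have h := hlower (-y)
  rw [map_neg, norm_neg] at h
  rw [norm_eq_abs, abs_le, mul_assoc]
  constructor <;> linarith [hlower y]

theorem abs_apply_div_two_mul_sqrt_le {x y : E} {ℓ : E →L[ℝ] ℝ} {s M : ℝ}
    (hℓ : ‖ℓ‖ ≤ 2 * ‖x‖) (hy : ‖y‖ ≤ s) (hM : 0 < M) (hxM : ‖x‖ ^ 2 ≤ M) :
    |ℓ y / (2 * √M)| ≤ s := by
  have hx : ‖x‖ ≤ √M := le_sqrt_of_sq_le hxM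
  rw [abs_div, abs_of_pos (show 0 < 2 * √M by positivity), div_le_iff₀ (by positivity)]
  calc |ℓ y| ≤ ‖ℓ‖ * ‖y‖ := ℓ.le_opNorm y
    _ ≤ 2 * √M * s := by gcongr; linarith
    _ = s * (2 * √M) := by ring

theorem exp_mul_sqrt_sq_norm_add_le {κ s t c M : ℝ} {x y : E} {ℓ : E →L[ℝ] ℝ}
    (hℓ : ∀ z, ‖x + z‖ ^ 2 ≤ ‖x‖ ^ 2 + ℓ z + κ * ‖z‖ ^ 2) (hκ : 0 ≤ κ) (hs : 0 < s)
    (hy : ‖y‖ ≤ s) (ht : 0 ≤ t) (hc : 0 ≤ c) (hM : 0 < M) (hxM : ‖x‖ ^ 2 + c + κ * s ^ 2 ≤ M) :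
    exp (t * √(‖x + y‖ ^ 2 + c)) ≤
      exp (t * √M) * (cosh (t * s) + ℓ y / (2 * √M) / s * sinh (t * s)) := by
  have hsqrt : √(‖x + y‖ ^ 2 + c) ≤ √M + ℓ y / (2 * √M) := by
    have hκy : κ * ‖y‖ ^ 2 ≤ κ * s ^ 2 := by gcongr
    calc √(‖x + y‖ ^ 2 + c) ≤ √M + (‖x + y‖ ^ 2 + c - M) / (2 * √M) :=
          sqrt_le_sqrt_add_sub_div (by positivity) hM
      _ ≤ √M + ℓ y / (2 * √M) := by gcongr; linarith [hℓ y]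
  have hY := abs_apply_div_two_mul_sqrt_le (ℓ.norm_le_two_mul_of_sq_norm_add_le hℓ) hy hM
    (by nlinarith)
  calc exp (t * √(‖x + y‖ ^ 2 + c)) ≤ exp (t * √M + t * (ℓ y / (2 * √M))) := by
        gcongr; linarith [mul_le_mul_of_nonneg_left hsqrt ht]
    _ ≤ exp (t * √M) * (cosh (t * s) + ℓ y / (2 * √M) / s * sinh (t * s)) := by
        rw [exp_add]; gcongr; exact exp_mul_le_cosh_add_div_mul_sinh hs hY t

end

section

variable {E : Type*} [NormedAddCommGroup E] {Ω : Type*} {𝒢 m0 : MeasurableSpace Ω}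
  {P : Measure Ω}

theorem integrable_exp_mul_sqrt_sq_norm_add_of_ae_bound [IsFiniteMeasure P] {X : Ω → E}
    (hX : AEStronglyMeasurable X P) {B : ℝ} (hB : ∀ᵐ ω ∂P, ‖X ω‖ ≤ B) {t : ℝ} (ht : 0 ≤ t)
    (c : ℝ) : Integrable (fun ω => exp (t * √(‖X ω‖ ^ 2 + c))) P := by
  have hφ : Continuous fun x : E => exp (t * √(‖x‖ ^ 2 + c)) := by fun_prop
  refine .of_bound (hφ.comp_aestronglyMeasurable hX) (exp (t * √(B ^ 2 + c))) ?_
  filter_upwards [hB] with ω hω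
  rw [norm_of_nonneg (exp_pos _).le]
  gcongr

theorem ae_norm_sum_le_sum_of_ae_norm_le {ι : Type*} (s : Finset ι) {ξ : ι → Ω → E}
    {σ : ι → ℝ} (hξσ : ∀ i ∈ s, ∀ᵐ ω ∂P, ‖ξ i ω‖ ≤ σ i) :
    ∀ᵐ ω ∂P, ‖∑ i ∈ s, ξ i ω‖ ≤ ∑ i ∈ s, σ i := by
  filter_upwards [(eventually_all_finset s).2 hξσ] with ω hω
  exact (norm_sum_le _ _).trans (Finset.sum_le_sum hω)

variable [NormedSpace ℝ E]

theorem integral_apply_eq_zero_of_condExp_eq_zero [FiniteDimensional ℝ E] [MeasurableSpace E]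
    [BorelSpace E] (h𝒢 : 𝒢 ≤ m0) [IsFiniteMeasure P] {Λ : E → E →L[ℝ] ℝ} (hΛ : Measurable Λ)
    {X ξ : Ω → E} (hX : StronglyMeasurable[𝒢] X) (hξ : Integrable ξ P)
    (hξ𝒢 : P[ξ|𝒢] =ᵐ[P] 0) (hΛξ : Integrable (fun ω => Λ (X ω) (ξ ω)) P) :
    ∫ ω, Λ (X ω) (ξ ω) ∂P = 0 := by
  have hΛX : StronglyMeasurable[𝒢] fun ω => Λ (X ω) :=
    (hΛ.comp hX.measurable).stronglyMeasurable
  rw [← integral_condExp h𝒢]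
  refine integral_eq_zero_of_ae ?_
  filter_upwards [condExp_bilin_of_stronglyMeasurable_left (.id ℝ _) hΛX hΛξ hξ, hξ𝒢]
    with ω hpull hzero
  simpa [hzero] using hpull

theorem integral_exp_mul_sqrt_sq_norm_add_le [FiniteDimensional ℝ E] [MeasurableSpace E]
    [BorelSpace E] (h𝒢 : 𝒢 ≤ m0) [IsFiniteMeasure P] {κ : ℝ} (hκ : 0 < κ)
    {L : E → E →L[ℝ] ℝ} (hLm : Measurable L)
    (hL : ∀ x y, ‖x + y‖ ^ 2 ≤ ‖x‖ ^ 2 + L x y + κ * ‖y‖ ^ 2)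
    {X ξ : Ω → E} (hX : StronglyMeasurable[𝒢] X) (hξ : Integrable ξ P) (hξ𝒢 : P[ξ|𝒢] =ᵐ[P] 0)
    {s : ℝ} (hs : 0 < s) (hξs : ∀ᵐ ω ∂P, ‖ξ ω‖ ≤ s) {t c : ℝ} (ht : 0 ≤ t) (hc : 0 ≤ c)
    (hXint : Integrable (fun ω => exp (t * √(‖X ω‖ ^ 2 + (c + κ * s ^ 2)))) P) :
    ∫ ω, exp (t * √(‖X ω + ξ ω‖ ^ 2 + c)) ∂P ≤
      exp (t ^ 2 * s ^ 2 / 2) * ∫ ω, exp (t * √(‖X ω‖ ^ 2 + (c + κ * s ^ 2))) ∂P := by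
  set M : E → ℝ := fun x => ‖x‖ ^ 2 + (c + κ * s ^ 2)
  set Λ : E → E →L[ℝ] ℝ := fun x => (exp (t * √(M x)) / (2 * √(M x))) • L x
  have hM : ∀ x, 0 < M x := fun x => by positivity
  have hΛ : Measurable Λ := by fun_prop
  have hΛ_apply : ∀ x y, Λ x y = exp (t * √(M x)) * (L x y / (2 * √(M x))) := fun x y => by
    simp only [Λ, FunLike.coe_smul, Pi.smul_apply, smul_eq_mul]; ring
  have hpt : ∀ᵐ ω ∂P, exp (t * √(‖X ω + ξ ω‖ ^ 2 + c)) ≤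
      cosh (t * s) * exp (t * √(M (X ω))) + sinh (t * s) / s * Λ (X ω) (ξ ω) := by
    filter_upwards [hξs] with ω hω
    refine (exp_mul_sqrt_sq_norm_add_le (hL (X ω)) hκ.le hs hω ht hc (hM (X ω))
      (by simp only [M]; linarith)).trans (le_of_eq ?_)
    rw [hΛ_apply]
    ring
  have hΛξ : Integrable (fun ω => Λ (X ω) (ξ ω)) P := by
    refine (hXint.const_mul s).mono'
      (isBoundedBilinearMap_apply.continuous.comp_aestronglyMeasurable
        ((hΛ.comp (hX.mono h𝒢).measurable).aestronglyMeasurable.prodMk hξ.1)) ?_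
    filter_upwards [hξs] with ω hω
    rw [hΛ_apply, norm_mul, norm_of_nonneg (exp_pos _).le, mul_comm s]
    gcongr
    exact abs_apply_div_two_mul_sqrt_le ((L (X ω)).norm_le_two_mul_of_sq_norm_add_le (hL _))
      hω (hM (X ω)) (by simp only [M]; nlinarith)
  calc ∫ ω, exp (t * √(‖X ω + ξ ω‖ ^ 2 + c)) ∂P
      ≤ ∫ ω, (cosh (t * s) * exp (t * √(M (X ω))) + sinh (t * s) / s * Λ (X ω) (ξ ω)) ∂P :=
        integral_mono_of_nonneg (by filter_upwards with ω using (exp_pos _).le)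
          ((hXint.const_mul _).add (hΛξ.const_mul _)) hpt
    _ = cosh (t * s) * ∫ ω, exp (t * √(M (X ω))) ∂P := by
        rw [integral_add (hXint.const_mul _) (hΛξ.const_mul _), integral_const_mul,
          integral_const_mul, integral_apply_eq_zero_of_condExp_eq_zero h𝒢 hΛ hX hξ hξ𝒢 hΛξ,
          mul_zero, add_zero]
    _ ≤ exp (t ^ 2 * s ^ 2 / 2) * ∫ ω, exp (t * √(M (X ω))) ∂P := by
        gcongr
        simpa only [mul_pow] using cosh_le_exp_half_sq (t * s)

open Finset in
theorem integral_exp_mul_sqrt_sq_norm_sum_le [FiniteDimensional ℝ E] [MeasurableSpace E]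
    [BorelSpace E] [IsProbabilityMeasure P] (ℱ : Filtration ℕ m0) {κ : ℝ} (hκ : 0 < κ)
    {L : E → E →L[ℝ] ℝ} (hLm : Measurable L)
    (hL : ∀ x y, ‖x + y‖ ^ 2 ≤ ‖x‖ ^ 2 + L x y + κ * ‖y‖ ^ 2)
    {ξ : ℕ → Ω → E} {σ : ℕ → ℝ} (hσ : ∀ i, 0 < σ i)
    (hmeas : ∀ i, StronglyMeasurable[ℱ i] (ξ i)) (hint : ∀ i, Integrable (ξ i) P)
    (hmd : ∀ i, 1 ≤ i → P[ξ i | ℱ (i - 1)] =ᵐ[P] 0)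
    (hbdd : ∀ i, 1 ≤ i → ∀ᵐ ω ∂P, ‖ξ i ω‖ ≤ σ i) {t : ℝ} (ht : 0 ≤ t) (N : ℕ) {c : ℝ}
    (hc : 0 ≤ c) :
    ∫ ω, exp (t * √(‖∑ i ∈ Icc 1 N, ξ i ω‖ ^ 2 + c)) ∂P ≤
      exp (t * √(c + κ * ∑ i ∈ Icc 1 N, σ i ^ 2) + t ^ 2 * (∑ i ∈ Icc 1 N, σ i ^ 2) / 2) := by
  induction N generalizing c with
  | zero => simp
  | succ n ih =>
    have hn : 1 ≤ n + 1 := by omega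
    simp only [sum_Icc_succ_top hn]
    have hS : StronglyMeasurable[ℱ n] fun ω => ∑ i ∈ Icc 1 n, ξ i ω :=
      Finset.stronglyMeasurable_fun_sum _ fun i hi => (hmeas i).mono (ℱ.mono (mem_Icc.1 hi).2)
    have hSB := ae_norm_sum_le_sum_of_ae_norm_le (P := P) (Icc 1 n) fun i hi =>
      hbdd i (mem_Icc.1 hi).1
    calc _ ≤ exp (t ^ 2 * σ (n + 1) ^ 2 / 2) *
          ∫ ω, exp (t * √(‖∑ i ∈ Icc 1 n, ξ i ω‖ ^ 2 + (c + κ * σ (n + 1) ^ 2))) ∂P :=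
          integral_exp_mul_sqrt_sq_norm_add_le (ℱ.le n) hκ hLm hL hS (hint _)
            (by simpa using hmd (n + 1) hn) (hσ _) (hbdd _ hn) ht hc
            (integrable_exp_mul_sqrt_sq_norm_add_of_ae_bound
              (hS.mono (ℱ.le n)).aestronglyMeasurable hSB ht _)
      _ ≤ exp (t ^ 2 * σ (n + 1) ^ 2 / 2) * exp (t * √(c + κ * σ (n + 1) ^ 2 +
            κ * ∑ i ∈ Icc 1 n, σ i ^ 2) + t ^ 2 * (∑ i ∈ Icc 1 n, σ i ^ 2) / 2) := by
          gcongr; exact ih (by positivity)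
      _ = _ := by
          rw [← exp_add, mul_add κ, ← add_assoc, add_right_comm c]
          ring_nf

end

theorem martingale_deviation_smooth_space_general {E : Type*} [NormedAddCommGroup E]
    [NormedSpace ℝ E] [FiniteDimensional ℝ E]
    {Ω : Type*} {m0 : MeasurableSpace Ω}
    (P : Measure Ω) [IsProbabilityMeasure P] (ℱ : Filtration ℕ m0)
    (κ : ℝ) (hκ : 1 ≤ κ)
    (hsm : ∀ x y : E, ‖x + y‖ ^ 2 ≤
      ‖x‖ ^ 2 + fderiv ℝ (fun z : E => ‖z‖ ^ 2) x y + κ * ‖y‖ ^ 2)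
    (ξ : ℕ → Ω → E) (σ : ℕ → ℝ) (hσ : ∀ i, 0 < σ i)
    (hmeas : ∀ i, StronglyMeasurable[ℱ i] (ξ i))
    (hint : ∀ i, Integrable (ξ i) P)
    (hmd : ∀ i, 1 ≤ i → P[ξ i | ℱ (i - 1)] =ᵐ[P] 0)
    (hbdd : ∀ i, 1 ≤ i → ∀ᵐ ω ∂P, ‖ξ i ω‖ ≤ σ i)
    (N : ℕ) (hN : 1 ≤ N) (γ : ℝ) (hγ : 0 ≤ γ) :
    P {ω | ‖∑ i ∈ Finset.Icc 1 N, ξ i ω‖ ≥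
        (Real.sqrt κ + γ) * Real.sqrt (∑ i ∈ Finset.Icc 1 N, (σ i) ^ 2)} ≤
      ENNReal.ofReal (Real.exp (-γ ^ 2 / 2)) := by
  borelize E
  set S := fun ω => ∑ i ∈ Finset.Icc 1 N, ξ i ω
  set v := ∑ i ∈ Finset.Icc 1 N, σ i ^ 2
  have hv : 0 < v := Finset.sum_pos (fun i _ => pow_pos (hσ i) 2) ⟨1, Finset.mem_Icc.2 ⟨le_rfl, hN⟩⟩
  set t := γ / √v
  have ht : 0 ≤ t := by positivity
  have hmgf := integral_exp_mul_sqrt_sq_norm_sum_le ℱ (by linarith) (measurable_fderiv ℝ _) hsm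
    hσ hmeas hint hmd hbdd ht N le_rfl
  have hSint := integrable_exp_mul_sqrt_sq_norm_add_of_ae_bound
    (integrable_finsetSum (Finset.Icc 1 N) fun i _ => hint i).aestronglyMeasurable
    (ae_norm_sum_le_sum_of_ae_norm_le (Finset.Icc 1 N) fun i hi =>
      hbdd i (Finset.mem_Icc.1 hi).1) ht 0
  simp only [add_zero, zero_add, sqrt_sq (norm_nonneg _)] at hmgf hSint
  rw [← ofReal_measureReal]
  gcongr
  calc P.real {ω | (√κ + γ) * √v ≤ ‖S ω‖}
      ≤ exp (-t * ((√κ + γ) * √v)) * ProbabilityTheory.mgf (fun ω => ‖S ω‖) P t :=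
        ProbabilityTheory.measure_ge_le_exp_mul_mgf _ ht hSint
    _ ≤ exp (-t * ((√κ + γ) * √v)) * exp (t * √(κ * v) + t ^ 2 * v / 2) := by
        gcongr; exact hmgf
    _ = exp (-γ ^ 2 / 2) := by
        have htv : t * √v = γ := div_mul_cancel₀ γ (sqrt_pos.2 hv).ne'
        rw [← exp_add, sqrt_mul (by linarith)]
        congr 1
        linear_combination (-γ + (t * √v + γ) / 2) * htv - t ^ 2 / 2 * sq_sqrt hv.le

theorem martingale_deviation_smooth_space {E : Type*} [NormedAddCommGroup E]
    [NormedSpace ℝ E] [FiniteDimensional ℝ E]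
    {Ω : Type*} {m0 : MeasurableSpace Ω}
    (P : Measure Ω) [IsProbabilityMeasure P] (ℱ : Filtration ℕ m0)
    (κ : ℝ) (hκ : 1 ≤ κ)
    (hC1 : ContDiff ℝ 1 (fun x : E => ‖x‖ ^ 2))
    (hsm : ∀ x y : E, ‖x + y‖ ^ 2 ≤
      ‖x‖ ^ 2 + fderiv ℝ (fun z : E => ‖z‖ ^ 2) x y + κ * ‖y‖ ^ 2)
    (ξ : ℕ → Ω → E) (σ : ℕ → ℝ) (hσ : ∀ i, 0 < σ i)
    (hmeas : ∀ i, StronglyMeasurable[ℱ i] (ξ i))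
    (hint : ∀ i, Integrable (ξ i) P)
    (hmd : ∀ i, 1 ≤ i → P[ξ i | ℱ (i - 1)] =ᵐ[P] 0)
    (hbdd : ∀ i, 1 ≤ i → ∀ᵐ ω ∂P, ‖ξ i ω‖ ≤ σ i)
    (N : ℕ) (hN : 1 ≤ N) (γ : ℝ) (hγ : 0 ≤ γ) :
    P {ω | ‖∑ i ∈ Finset.Icc 1 N, ξ i ω‖ ≥
        (Real.sqrt κ + γ) * Real.sqrt (∑ i ∈ Finset.Icc 1 N, (σ i) ^ 2)} ≤
      ENNReal.ofReal (Real.exp (-γ ^ 2 / 2)) :=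
  martingale_deviation_smooth_space_general P ℱ κ hκ hsm ξ σ hσ hmeas hint hmd hbdd N hN γ hγ
end
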